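/- If a vertex x is n-periodic from time T, i.e. u_{t+n}(x) = u_t(x) for all t ≥ T, and u_T(x) ≠ 0, then x advances at every step from time T onward: u_{t+1}(x) = u_t(x) + 1 for all t ≥ T. -/

import Mathlib

/- The Greenberg–Hastings update rule on a simple graph `G` with state space `ZMod n`:
`𝒢u(x) = u(x)+1` if `u(x) ≠ 0`; `𝒢u(x) = 1` if `u(x) = 0` and some neighbor is in state `1`;
`𝒢u(x) = 0` otherwise. -/
open Classical in
noncomputable def ghUpdate {V : Type*} (n : ℕ) (G : SimpleGraph V) (u : V → ZMod n) :
    V → ZMod n :=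
  fun x => if u x = 0 then (if ∃ y, G.Adj x y ∧ u y = 1 then 1 else 0) else u x + 1

/-!
The state of a single vertex either advances by one or stays put, and it can only stay put at
`0`. Over a period of `n` steps the number of advances is a multiple of `n` and at most `n`; so
once the vertex stalls inside a period it stalls for the whole period, sitting at `0`. Every
window of `n + 1` consecutive times after `T` contains a time congruent to `T` modulo `n`, so
periodicity would force `u_T(x) = 0`.
-/

open Finset

theorem exists_le_eq_of_periodic_from {α : Type*} {f : ℕ → α} {n T t : ℕ} (hn : 0 < n)
    (hper : ∀ s, T ≤ s → f (s + n) = f s) (ht : T ≤ t) : ∃ s ≤ n, f T = f (t + s) := by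
  have hmul : ∀ k, f (T + k * n) = f T := by
    intro k
    induction k with
    | zero => simp
    | succ k ih => rw [add_mul, one_mul, ← add_assoc, hper _ (Nat.le_add_right _ _), ih]
  obtain ⟨q, r, hr, hqr⟩ : ∃ q r, r < n ∧ t - T = q * n + r :=
    ⟨(t - T) / n, (t - T) % n, Nat.mod_lt _ hn, by rw [mul_comm, Nat.div_add_mod]⟩
  refine ⟨n - r, by omega, ?_⟩
  rw [← hmul (q + 1)]
  congr 1
  rw [add_mul, one_mul]
  omega

theorem ZMod.eq_on_period_of_stall {n : ℕ} [NeZero n] {f : ℕ → ZMod n}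
    (hstep : ∀ s, f (s + 1) = f s ∨ f (s + 1) = f s + 1) {t : ℕ}
    (hper : f (t + n) = f t) (hstall : f (t + 1) = f t) : ∀ s ≤ n, f (t + s) = f t := by
  set d : ℕ → ℕ := fun s => (f (t + (s + 1)) - f (t + s)).val with hd
  have hd_le : ∀ s, d s ≤ 1 := fun s => by
    rcases hstep (t + s) with h | h <;>
      simp [hd, ← add_assoc, h, ZMod.val_one_eq_one_mod, Nat.mod_le]
  have htel : ∀ m, f (t + m) = f t + ((∑ s ∈ range m, d s : ℕ) : ZMod n) := fun m => by
    simp only [hd, Nat.cast_sum, ZMod.natCast_zmod_val]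
    rw [sum_range_sub (fun s => f (t + s)), add_zero, add_sub_cancel]
  have hsum_lt : ∑ s ∈ range n, d s < n := by
    obtain ⟨m, rfl⟩ : ∃ m, n = m + 1 := Nat.exists_eq_add_one.mpr (NeZero.pos n)
    have hd0 : d 0 = 0 := by simp [hd, hstall]
    have : ∑ s ∈ range m, d (s + 1) ≤ m := by
      simpa using sum_le_sum fun s (_ : s ∈ range m) => hd_le (s + 1)
    rw [sum_range_succ', hd0]
    omega
  have hsum_zero : ∑ s ∈ range n, d s = 0 := by
    refine Nat.eq_zero_of_dvd_of_lt ((ZMod.natCast_eq_zero_iff _ _).mp ?_) hsum_lt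
    simpa [hper] using htel n
  intro s hs
  have : ∑ i ∈ range s, d i = 0 :=
    Nat.eq_zero_of_le_zero <| hsum_zero ▸ sum_le_sum_of_subset (range_subset_range.mpr hs)
  simp [htel s, this]

section GreenbergHastings

variable {V : Type*} {n : ℕ} {G : SimpleGraph V} {u : V → ZMod n} {x : V}

theorem ghUpdate_apply_of_ne_zero (h : u x ≠ 0) : ghUpdate n G u x = u x + 1 := by
  simp [ghUpdate, h]

theorem ghUpdate_apply_eq_or_eq_add_one :
    ghUpdate n G u x = u x ∨ ghUpdate n G u x = u x + 1 := by
  by_cases h : u x = 0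
  · simp only [ghUpdate, h, if_true]
    split_ifs <;> simp
  · exact Or.inr (ghUpdate_apply_of_ne_zero h)

end GreenbergHastings

theorem stmt_18_general {V : Type*} (n : ℕ) (hn : 2 ≤ n) (G : SimpleGraph V)
    (u₀ : V → ZMod n) (x : V) (T : ℕ)
    (hper : ∀ t, T ≤ t → (ghUpdate n G)^[t + n] u₀ x = (ghUpdate n G)^[t] u₀ x)
    (hT : (ghUpdate n G)^[T] u₀ x ≠ 0) :
    ∀ t, T ≤ t → (ghUpdate n G)^[t + 1] u₀ x = (ghUpdate n G)^[t] u₀ x + 1 := by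
  have : Fact (1 < n) := ⟨hn⟩
  set f : ℕ → ZMod n := fun t => (ghUpdate n G)^[t] u₀ x with hf
  have hsucc : ∀ s, f (s + 1) = ghUpdate n G ((ghUpdate n G)^[s] u₀) x := fun s => by
    simp only [hf, Function.iterate_succ_apply']
  have hstep : ∀ s, f (s + 1) = f s ∨ f (s + 1) = f s + 1 := fun s =>
    hsucc s ▸ ghUpdate_apply_eq_or_eq_add_one
  intro t ht
  by_contra hadv
  have hstall : f (t + 1) = f t := (hstep t).resolve_right hadv
  have hzero : f t = 0 := by
    by_contra h
    exact hadv ((hsucc t).trans (ghUpdate_apply_of_ne_zero h))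
  obtain ⟨s, hs, hTs⟩ := exists_le_eq_of_periodic_from (f := f) (by omega) hper ht
  exact hT (hTs.trans ((ZMod.eq_on_period_of_stall hstep (hper t ht) hstall s hs).trans hzero))

theorem stmt_18 {V : Type*} [Fintype V] (n : ℕ) (hn : 2 ≤ n) (G : SimpleGraph V)
    (u₀ : V → ZMod n) (x : V) (T : ℕ)
    (hper : ∀ t, T ≤ t → (ghUpdate n G)^[t + n] u₀ x = (ghUpdate n G)^[t] u₀ x)
    (hT : (ghUpdate n G)^[T] u₀ x ≠ 0) :
    ∀ t, T ≤ t → (ghUpdate n G)^[t + 1] u₀ x = (ghUpdate n G)^[t] u₀ x + 1 :=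
  stmt_18_general n hn G u₀ x T hper hT
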